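/- End-to-end plaintext correctness of BatchSquare: let L, s be natural numbers, δ an integer, and for 1 ≤ i ≤ s let xᵢ be an integer and rᵢ a natural number such that 0 ≤ xᵢ + δ and xᵢ + δ + rᵢ < L. Define C = Σ_{i=1}^{s} L^(i−1)·(xᵢ + rᵢ + δ). Then for every i, setting aᵢ = ⌊(C mod L^i) / L^(i−1)⌋ − δ, one has aᵢ = xᵢ + rᵢ and aᵢ² − 2rᵢ·(xᵢ + δ) − rᵢ² + 2δ·rᵢ = xᵢ². -/

import Mathlib

/-!
Each blinded value `xᵢ + rᵢ + δ` lies in `[0, L)`, so it is exactly the `(i-1)`-th base-`L` digit of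
`C`: the digits below it contribute less than `L^(i-1)`, and those above it are divisible by `L^i`.
Subtracting `δ` recovers `xᵢ + rᵢ`, and the unmasking identity is a polynomial identity.
-/

open Finset

section BaseExpansion

variable {L : ℤ} {d : ℕ → ℤ}

theorem sum_range_pow_mul_nonneg_and_lt {n : ℕ} (hd0 : ∀ j < n, 0 ≤ d j)
    (hdL : ∀ j < n, d j < L) :
    0 ≤ ∑ j ∈ range n, L ^ j * d j ∧ ∑ j ∈ range n, L ^ j * d j < L ^ n := by
  induction n with
  | zero => simp
  | succ n ih =>
    obtain ⟨hS0, hSL⟩ := ih (fun j hj => hd0 j (by omega)) (fun j hj => hdL j (by omega))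
    have hn0 := hd0 n n.lt_succ_self
    have hnL := hdL n n.lt_succ_self
    have hpow : 0 ≤ L ^ n := pow_nonneg (by omega) n
    rw [sum_range_succ, pow_succ]
    constructor
    · positivity
    · nlinarith

theorem sum_range_pow_mul_emod_pow {k m : ℕ} (hd0 : ∀ j < k + m, 0 ≤ d j)
    (hdL : ∀ j < k + m, d j < L) :
    (∑ j ∈ range (k + m), L ^ j * d j) % L ^ k = ∑ j ∈ range k, L ^ j * d j := by
  have hhigh : ∑ j ∈ range m, L ^ (k + j) * d (k + j)
      = L ^ k * ∑ j ∈ range m, L ^ j * d (k + j) := by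
    rw [mul_sum]
    exact sum_congr rfl fun j _ => by ring
  obtain ⟨hS0, hSL⟩ :=
    sum_range_pow_mul_nonneg_and_lt (L := L) (d := d) (n := k)
      (fun j hj => hd0 j (by omega)) (fun j hj => hdL j (by omega))
  rw [sum_range_add, hhigh, Int.add_mul_emod_self_left, Int.emod_eq_of_lt hS0 hSL]

theorem sum_range_succ_pow_mul_ediv_pow {k : ℕ} (hd0 : ∀ j ≤ k, 0 ≤ d j)
    (hdL : ∀ j ≤ k, d j < L) :
    (∑ j ∈ range (k + 1), L ^ j * d j) / L ^ k = d k := by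
  have hL : 0 < L := lt_of_le_of_lt (hd0 k le_rfl) (hdL k le_rfl)
  obtain ⟨hS0, hSL⟩ :=
    sum_range_pow_mul_nonneg_and_lt (L := L) (d := d) (n := k)
      (fun j hj => hd0 j hj.le) (fun j hj => hdL j hj.le)
  rw [sum_range_succ, Int.add_mul_ediv_left _ _ (pow_pos hL k).ne', Int.ediv_eq_zero_of_lt hS0 hSL,
    zero_add]

theorem sum_range_pow_mul_emod_ediv {n k : ℕ} (hk : k < n) (hd0 : ∀ j < n, 0 ≤ d j)
    (hdL : ∀ j < n, d j < L) :
    (∑ j ∈ range n, L ^ j * d j) % L ^ (k + 1) / L ^ k = d k := by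
  obtain ⟨m, rfl⟩ : ∃ m, n = k + 1 + m := ⟨n - (k + 1), by omega⟩
  rw [sum_range_pow_mul_emod_pow hd0 hdL,
    sum_range_succ_pow_mul_ediv_pow (fun j hj => hd0 j (by omega)) (fun j hj => hdL j (by omega))]

end BaseExpansion

theorem sum_Icc_one_eq_sum_range (s : ℕ) (f : ℕ → ℤ) :
    ∑ i ∈ Icc 1 s, f i = ∑ j ∈ range s, f (j + 1) := by
  rw [range_eq_Ico, sum_Ico_add' f 0 s 1, zero_add, Ico_add_one_right_eq_Icc]

/-- End-to-end plaintext correctness of the BatchSquare protocol. -/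
theorem batchSquare_correct (L s : ℕ) (δ : ℤ) (x : ℕ → ℤ) (r : ℕ → ℕ)
    (hx0 : ∀ i ∈ Finset.Icc 1 s, 0 ≤ x i + δ)
    (hxL : ∀ i ∈ Finset.Icc 1 s, x i + δ + (r i : ℤ) < (L : ℤ))
    (C : ℤ)
    (hC : C = ∑ i ∈ Finset.Icc 1 s, (L : ℤ) ^ (i - 1) * (x i + (r i : ℤ) + δ)) :
    ∀ i ∈ Finset.Icc 1 s,
      (C % (L : ℤ) ^ i) / (L : ℤ) ^ (i - 1) - δ = x i + (r i : ℤ) ∧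
      (x i + (r i : ℤ)) ^ 2 - 2 * (r i : ℤ) * (x i + δ) - (r i : ℤ) ^ 2
          + 2 * δ * (r i : ℤ) = x i ^ 2 := by
  intro i hi
  obtain ⟨k, rfl⟩ : ∃ k, i = k + 1 := ⟨i - 1, by grind⟩
  set d : ℕ → ℤ := fun j => x (j + 1) + r (j + 1) + δ
  have hmem : ∀ j < s, j + 1 ∈ Icc 1 s := fun j hj => mem_Icc.2 ⟨by omega, hj⟩
  have hd0 : ∀ j < s, 0 ≤ d j := fun j hj => by
    linarith [hx0 _ (hmem j hj), Int.natCast_nonneg (r (j + 1))]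
  have hdL : ∀ j < s, d j < L := fun j hj => by linarith [hxL _ (hmem j hj)]
  have hCd : C = ∑ j ∈ range s, (L : ℤ) ^ j * d j := by
    rw [hC, sum_Icc_one_eq_sum_range]
    rfl
  refine ⟨?_, by ring⟩
  rw [hCd, Nat.add_sub_cancel, sum_range_pow_mul_emod_ediv (by grind) hd0 hdL]
  ring
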